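/- arXiv:2111.14917 — 2 statements merged into one kernel-verified Lean document; each statement's English description precedes it below -/
import Mathlib

section
/- Negative association is preserved under monotone maps on disjoint blocks: if X_1,...,X_n are negatively associated, I_1,...,I_m is a partition of {1,...,n}, and each f_j : ℝ^{|I_j|} → ℝ is monotone non-decreasing, then the random variables Y_j = f_j(X_k, k ∈ I_j), j = 1,...,m, are negatively associated. -/
open Finset

/-- Expectation on a finite probability space with weight function `p`. -/
def expect {Ω : Type*} [Fintype Ω] (p : Ω → ℝ) (f : Ω → ℝ) : ℝ :=
  ∑ ω, p ω * f ω

/-- `f` depends only on the coordinates in `I`. -/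
def FnDependsOn {ι : Type*} (f : (ι → ℝ) → ℝ) (I : Finset ι) : Prop :=
  ∀ x y : ι → ℝ, (∀ i ∈ I, x i = y i) → f x = f y

/-- `f` is monotone non-decreasing in the coordinatewise order. -/
def MonoFn {ι : Type*} (f : (ι → ℝ) → ℝ) : Prop :=
  ∀ x y : ι → ℝ, (∀ i, x i ≤ y i) → f x ≤ f y

/-- `f` is bounded. -/
def BddFn {ι : Type*} (f : (ι → ℝ) → ℝ) : Prop :=
  ∃ C, ∀ x, |f x| ≤ C

/-- The family `{X_i : i ∈ T}` is negatively associated under `p`: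
for all disjoint `I, J ⊆ T` and all pairs of bounded monotone non-decreasing
functions `f` (depending only on `I`) and `g` (depending only on `J`),
`E[f·g] ≤ E[f]·E[g]`. -/
def NegAssoc {Ω ι : Type*} [Fintype Ω] (p : Ω → ℝ) (T : Finset ι)
    (X : ι → Ω → ℝ) : Prop :=
  ∀ I J : Finset ι, I ⊆ T → J ⊆ T → Disjoint I J →
    ∀ f g : (ι → ℝ) → ℝ, FnDependsOn f I → FnDependsOn g J →
      MonoFn f → MonoFn g → BddFn f → BddFn g →
        expect p (fun ω => f (fun i => X i ω) * g (fun i => X i ω)) ≤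
          expect p (fun ω => f (fun i => X i ω)) *
            expect p (fun ω => g (fun i => X i ω))

theorem FnDependsOn.comp_of_blocks {ι κ : Type*} [DecidableEq ι] {I : κ → Finset ι}
    {f : κ → (ι → ℝ) → ℝ} (hf : ∀ j, FnDependsOn (f j) (I j)) {F : (κ → ℝ) → ℝ} {J : Finset κ}
    (hF : FnDependsOn F J) :
    FnDependsOn (fun x => F (fun j => f j x)) (J.biUnion I) :=
  fun x y hxy => hF _ _ fun j hj =>
    hf j x y fun i hi => hxy i (mem_biUnion.mpr ⟨j, hj, hi⟩)

theorem MonoFn.comp_of_blocks {ι κ : Type*} {f : κ → (ι → ℝ) → ℝ} (hf : ∀ j, MonoFn (f j))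
    {F : (κ → ℝ) → ℝ} (hF : MonoFn F) : MonoFn (fun x => F (fun j => f j x)) :=
  fun x y hxy => hF _ _ fun j => hf j x y hxy

theorem BddFn.comp {ι κ : Type*} {F : (κ → ℝ) → ℝ} (hF : BddFn F) (g : (ι → ℝ) → κ → ℝ) :
    BddFn (fun x => F (g x)) :=
  hF.imp fun _ hC x => hC (g x)

theorem Set.PairwiseDisjoint.disjoint_biUnion {ι κ : Type*} [DecidableEq ι] {T : Finset κ}
    {I : κ → Finset ι} (hI : (T : Set κ).PairwiseDisjoint I) {J₁ J₂ : Finset κ}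
    (hJ₁ : J₁ ⊆ T) (hJ₂ : J₂ ⊆ T) (hJ : Disjoint J₁ J₂) :
    Disjoint (J₁.biUnion I) (J₂.biUnion I) := by
  rw [disjoint_biUnion_left]
  intro j hj
  rw [disjoint_biUnion_right]
  intro k hk
  exact hI (hJ₁ hj) (hJ₂ hk) fun hjk => Finset.disjoint_left.mp hJ hj (hjk ▸ hk)

/-- A test pair `F, G` for the blocks `Y j = f j X`, depending on disjoint sets `J₁, J₂` of blocks,
composes with `f` to a test pair for `X` on the disjoint unions of these blocks. -/
theorem NegAssoc.comp_monotone_blocks {Ω ι κ : Type*} [Fintype Ω] [DecidableEq ι]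
    {p : Ω → ℝ} {S : Finset ι} {X : ι → Ω → ℝ} (hX : NegAssoc p S X) {T : Finset κ}
    {I : κ → Finset ι} (hIS : ∀ j ∈ T, I j ⊆ S) (hI : (T : Set κ).PairwiseDisjoint I)
    {f : κ → (ι → ℝ) → ℝ} (hdep : ∀ j, FnDependsOn (f j) (I j)) (hmono : ∀ j, MonoFn (f j)) :
    NegAssoc p T (fun j ω => f j (fun k => X k ω)) := by
  intro J₁ J₂ hJ₁ hJ₂ hJ F G hFdep hGdep hFmono hGmono hFbdd hGbdd
  exact hX (J₁.biUnion I) (J₂.biUnion I)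
    (biUnion_subset.mpr fun j hj => hIS j (hJ₁ hj)) (biUnion_subset.mpr fun j hj => hIS j (hJ₂ hj))
    (hI.disjoint_biUnion hJ₁ hJ₂ hJ) _ _
    (hFdep.comp_of_blocks hdep) (hGdep.comp_of_blocks hdep)
    (hFmono.comp_of_blocks hmono) (hGmono.comp_of_blocks hmono)
    (hFbdd.comp _) (hGbdd.comp _)

theorem negAssoc_monotone_map_general {Ω : Type*} [Fintype Ω] {n m : ℕ} (p : Ω → ℝ)
    (X : Fin n → Ω → ℝ) (hX : NegAssoc p Finset.univ X)
    (I : Fin m → Finset (Fin n))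
    (hdisj : ∀ j k : Fin m, j ≠ k → Disjoint (I j) (I k))
    (f : Fin m → (Fin n → ℝ) → ℝ)
    (hdep : ∀ j, FnDependsOn (f j) (I j))
    (hmono : ∀ j, MonoFn (f j)) :
    NegAssoc p Finset.univ (fun j ω => f j (fun k => X k ω)) :=
  hX.comp_monotone_blocks (fun _ _ => subset_univ _)
    (fun j _ k _ => hdisj j k) hdep hmono

/-- Negative association is preserved under monotone maps applied to
disjoint blocks of a partition of the variables. -/
theorem negAssoc_monotone_map {Ω : Type*} [Fintype Ω] {n m : ℕ} (p : Ω → ℝ)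
    (hp : ∀ ω, 0 ≤ p ω) (hsum : ∑ ω, p ω = 1)
    (X : Fin n → Ω → ℝ) (hX : NegAssoc p Finset.univ X)
    (I : Fin m → Finset (Fin n))
    (hdisj : ∀ j k : Fin m, j ≠ k → Disjoint (I j) (I k))
    (hcover : ∀ i : Fin n, ∃ j : Fin m, i ∈ I j)
    (f : Fin m → (Fin n → ℝ) → ℝ)
    (hdep : ∀ j, FnDependsOn (f j) (I j))
    (hmono : ∀ j, MonoFn (f j)) :
    NegAssoc p Finset.univ (fun j ω => f j (fun k => X k ω)) :=
  negAssoc_monotone_map_general p X hX I hdisj f hdep hmono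
end

section
/- Two-sided Chernoff–Hoeffding bound for negatively associated variables (covariance step): if X_1,...,X_n are negatively associated random variables, then for every real t, E[exp(t·∑ X_i)] ≤ ∏_i E[exp(t·X_i)]. -/
open Finset

/-!
Split `exp (t · ∑_{i ∈ S} X_i) = exp (t X_a) · exp (t · ∑_{i ∈ S \ {a}} X_i)`. Both factors are
non-decreasing functions of disjoint blocks when `t ≥ 0` and non-increasing ones when `t ≤ 0`,
so negative association (applied to the negated factors when `t ≤ 0`) bounds the expectation
of the product by the product of the expectations, and induction on `S` finishes. The
exponentials are unbounded, but on a finite sample space they may be clamped to bounded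
functions without changing any expectation.
-/

open Real

section Expect

variable {Ω : Type*} [Fintype Ω] {p : Ω → ℝ}

lemma expect_neg (p f : Ω → ℝ) : expect p (fun ω => -f ω) = -expect p f := by
  simp [_root_.expect]

lemma expect_const (hsum : ∑ ω, p ω = 1) (c : ℝ) : expect p (fun _ => c) = c := by
  rw [_root_.expect, ← sum_mul, hsum, one_mul]

lemma expect_nonneg (hp : ∀ ω, 0 ≤ p ω) {f : Ω → ℝ} (hf : ∀ ω, 0 ≤ f ω) : 0 ≤ expect p f :=
  sum_nonneg fun ω _ => mul_nonneg (hp ω) (hf ω)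

end Expect

section Clamp

variable {ι : Type*}

def clampFn (C : ℝ) (f : (ι → ℝ) → ℝ) : (ι → ℝ) → ℝ :=
  fun x => max (-C) (min (f x) C)

lemma clampFn_of_abs_le {C : ℝ} {f : (ι → ℝ) → ℝ} {x : ι → ℝ} (hx : |f x| ≤ C) :
    clampFn C f x = f x := by
  rw [abs_le] at hx
  simp only [clampFn, min_eq_left hx.2, max_eq_right hx.1]

lemma bddFn_clampFn (C : ℝ) (f : (ι → ℝ) → ℝ) : BddFn (clampFn C f) :=
  ⟨|C|, fun _ => abs_le.2
    ⟨(neg_le_neg (le_abs_self C)).trans (le_max_left _ _),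
      max_le (neg_le_abs C) ((min_le_right _ _).trans (le_abs_self C))⟩⟩

lemma MonoFn.clampFn {f : (ι → ℝ) → ℝ} (hf : MonoFn f) (C : ℝ) : MonoFn (clampFn C f) :=
  fun x y hxy => max_le_max le_rfl (min_le_min (hf x y hxy) le_rfl)

lemma FnDependsOn.clampFn {f : (ι → ℝ) → ℝ} {I : Finset ι} (hf : FnDependsOn f I) (C : ℝ) :
    FnDependsOn (clampFn C f) I :=
  fun x y hxy => by simp only [_root_.clampFn, hf x y hxy]

end Clamp

lemma fnDependsOn_comp_sum {ι : Type*} (F : ℝ → ℝ) (I : Finset ι) :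
    FnDependsOn (fun x => F (∑ i ∈ I, x i)) I :=
  fun x y hxy => by simp only [sum_congr rfl hxy]

lemma monoFn_comp_sum {ι : Type*} {F : ℝ → ℝ} (hF : Monotone F) (I : Finset ι) :
    MonoFn (fun x => F (∑ i ∈ I, x i)) :=
  fun _ _ hxy => hF (sum_le_sum fun i _ => hxy i)

lemma abs_le_sum_abs {Ω : Type*} [Fintype Ω] (h : Ω → ℝ) (ω : Ω) : |h ω| ≤ ∑ ω', |h ω'| :=
  single_le_sum (f := fun ω' => |h ω'|) (fun _ _ => abs_nonneg _) (mem_univ ω)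

namespace NegAssoc

variable {Ω ι : Type*} [Fintype Ω] {p : Ω → ℝ} {T I J : Finset ι} {X : ι → Ω → ℝ}

lemma expect_mul_le (hX : NegAssoc p T X) (hI : I ⊆ T) (hJ : J ⊆ T) (hIJ : Disjoint I J)
    {f g : (ι → ℝ) → ℝ} (hfI : FnDependsOn f I) (hgJ : FnDependsOn g J)
    (hf : MonoFn f) (hg : MonoFn g) :
    expect p (fun ω => f (fun i => X i ω) * g (fun i => X i ω)) ≤
      expect p (fun ω => f (fun i => X i ω)) * expect p (fun ω => g (fun i => X i ω)) := by
  set Cf := ∑ ω, |f (fun i => X i ω)|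
  set Cg := ∑ ω, |g (fun i => X i ω)|
  have hf_clamp : ∀ ω, clampFn Cf f (fun i => X i ω) = f (fun i => X i ω) := fun ω =>
    clampFn_of_abs_le (abs_le_sum_abs (fun ω => f (fun i => X i ω)) ω)
  have hg_clamp : ∀ ω, clampFn Cg g (fun i => X i ω) = g (fun i => X i ω) := fun ω =>
    clampFn_of_abs_le (abs_le_sum_abs (fun ω => g (fun i => X i ω)) ω)
  have h := hX I J hI hJ hIJ (clampFn Cf f) (clampFn Cg g) (hfI.clampFn Cf) (hgJ.clampFn Cg)
    (hf.clampFn Cf) (hg.clampFn Cg) (bddFn_clampFn Cf f) (bddFn_clampFn Cg g)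
  simpa only [hf_clamp, hg_clamp] using h

lemma expect_mul_le_of_antitone (hX : NegAssoc p T X) (hI : I ⊆ T) (hJ : J ⊆ T)
    (hIJ : Disjoint I J) {f g : (ι → ℝ) → ℝ} (hfI : FnDependsOn f I) (hgJ : FnDependsOn g J)
    (hf : ∀ x y : ι → ℝ, (∀ i, x i ≤ y i) → f y ≤ f x)
    (hg : ∀ x y : ι → ℝ, (∀ i, x i ≤ y i) → g y ≤ g x) :
    expect p (fun ω => f (fun i => X i ω) * g (fun i => X i ω)) ≤
      expect p (fun ω => f (fun i => X i ω)) * expect p (fun ω => g (fun i => X i ω)) := by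
  have h := hX.expect_mul_le hI hJ hIJ (f := fun x => -f x) (g := fun x => -g x)
    (fun x y hxy => congrArg Neg.neg (hfI x y hxy))
    (fun x y hxy => congrArg Neg.neg (hgJ x y hxy))
    (fun x y hxy => neg_le_neg (hf x y hxy)) (fun x y hxy => neg_le_neg (hg x y hxy))
  simpa only [neg_mul_neg, _root_.expect_neg] using h

lemma expect_exp_sum_union_le [DecidableEq ι] (hX : NegAssoc p T X) (hI : I ⊆ T) (hJ : J ⊆ T)
    (hIJ : Disjoint I J) (t : ℝ) :
    expect p (fun ω => exp (t * ∑ i ∈ I ∪ J, X i ω)) ≤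
      expect p (fun ω => exp (t * ∑ i ∈ I, X i ω)) *
        expect p (fun ω => exp (t * ∑ i ∈ J, X i ω)) := by
  simp only [sum_union hIJ, mul_add, exp_add]
  have hdepI := fnDependsOn_comp_sum (fun s => exp (t * s)) I
  have hdepJ := fnDependsOn_comp_sum (fun s => exp (t * s)) J
  rcases le_total 0 t with ht | ht
  · have hF : Monotone fun s => exp (t * s) := exp_monotone.comp (monotone_mul_left_of_nonneg ht)
    exact hX.expect_mul_le hI hJ hIJ hdepI hdepJ (monoFn_comp_sum hF I) (monoFn_comp_sum hF J)
  · have hF : Antitone fun s => exp (t * s) := exp_monotone.comp_antitone (antitone_mul_left ht)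
    exact hX.expect_mul_le_of_antitone hI hJ hIJ hdepI hdepJ
      (fun _ _ hxy => hF (sum_le_sum fun i _ => hxy i))
      (fun _ _ hxy => hF (sum_le_sum fun i _ => hxy i))

lemma expect_exp_sum_le_prod [DecidableEq ι] (hp : ∀ ω, 0 ≤ p ω) (hsum : ∑ ω, p ω = 1)
    (hX : NegAssoc p T X) (t : ℝ) {S : Finset ι} (hS : S ⊆ T) :
    expect p (fun ω => exp (t * ∑ i ∈ S, X i ω)) ≤
      ∏ i ∈ S, expect p (fun ω => exp (t * X i ω)) := by
  induction S using Finset.induction_on with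
  | empty => simp [_root_.expect_const hsum]
  | insert a s ha ih =>
    have haT : {a} ⊆ T := singleton_subset_iff.2 (hS (mem_insert_self a s))
    have hsT : s ⊆ T := (subset_insert a s).trans hS
    calc expect p (fun ω => exp (t * ∑ i ∈ insert a s, X i ω))
        ≤ expect p (fun ω => exp (t * X a ω)) *
            expect p (fun ω => exp (t * ∑ i ∈ s, X i ω)) := by
          simpa only [← insert_eq, sum_singleton] using
            hX.expect_exp_sum_union_le haT hsT (disjoint_singleton_left.2 ha) t
      _ ≤ expect p (fun ω => exp (t * X a ω)) *
            ∏ i ∈ s, expect p (fun ω => exp (t * X i ω)) :=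
          mul_le_mul_of_nonneg_left (ih hsT) (_root_.expect_nonneg hp fun _ => (exp_pos _).le)
      _ = ∏ i ∈ insert a s, expect p (fun ω => exp (t * X i ω)) := by
          rw [prod_insert ha]

end NegAssoc

/-- Chernoff–Hoeffding covariance step for negatively associated variables:
the moment generating function of the sum is bounded by the product of the
moment generating functions. -/
theorem mgf_sum_le_prod_of_negAssoc {Ω : Type*} [Fintype Ω] {n : ℕ}
    (p : Ω → ℝ) (hp : ∀ ω, 0 ≤ p ω) (hsum : ∑ ω, p ω = 1)
    (X : Fin n → Ω → ℝ) (hX : NegAssoc p Finset.univ X) (t : ℝ) :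
    expect p (fun ω => Real.exp (t * ∑ i, X i ω)) ≤
      ∏ i, expect p (fun ω => Real.exp (t * X i ω)) :=
  hX.expect_exp_sum_le_prod hp hsum t subset_rfl
end
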